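/- arXiv:math/9511214 — 2 statements merged into one kernel-verified Lean document; each statement's English description precedes it below -/
import Mathlib

section
/- Let E and F be Banach spaces, T : E → F a surjective continuous linear map, and x ∈ E, y ∈ F with Tx = y. For every ε > 0 there exists δ > 0 such that whenever T' : E → F is a continuous linear map with ‖T' − T‖ < δ, the equation T'x' = y has a solution x' ∈ E satisfying ‖x' − x‖ < ε. -/
open Filter Finset Function

lemma aux_perturb {E F : Type*} [NormedAddCommGroup E] [NormedSpace ℂ E] [CompleteSpace E]
    [NormedAddCommGroup F] [NormedSpace ℂ F]
    (T T' : E →L[ℂ] F) (C : ℝ) (hC : 0 < C)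
    (hpre : ∀ z : F, ∃ u, T u = z ∧ ‖u‖ ≤ C * ‖z‖)
    (hd : ‖T' - T‖ ≤ 1 / (2 * C)) (z : F) :
    ∃ u, T' u = z ∧ ‖u‖ ≤ 2 * C * ‖z‖ := by
  choose g hg hgn using hpre
  let u : ℕ → E := fun n => Nat.rec (g z) (fun _ w => g ((T - T') w)) n
  have u0 : u 0 = g z := rfl
  have usucc : ∀ n, u (n + 1) = g ((T - T') (u n)) := fun n => rfl
  have key : ∀ n, ‖u (n + 1)‖ ≤ (1 / 2) * ‖u n‖ := by
    intro n
    rw [usucc]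
    calc ‖g ((T - T') (u n))‖ ≤ C * ‖(T - T') (u n)‖ := hgn _
      _ ≤ C * (‖T - T'‖ * ‖u n‖) := by gcongr; exact (T - T').le_opNorm _
      _ ≤ C * (1 / (2 * C) * ‖u n‖) := by
          gcongr
          rwa [norm_sub_rev]
      _ = (1 / 2) * ‖u n‖ := by field_simp
  have ubound : ∀ n, ‖u n‖ ≤ (1 / 2) ^ n * (C * ‖z‖) := by
    intro n
    induction n with
    | zero => simpa [u0] using hgn z
    | succ n IH =>
      calc ‖u (n + 1)‖ ≤ (1 / 2) * ‖u n‖ := key n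
        _ ≤ (1 / 2) * ((1 / 2) ^ n * (C * ‖z‖)) := by gcongr
        _ = (1 / 2) ^ (n + 1) * (C * ‖z‖) := by ring
  have sNu : Summable fun n => ‖u n‖ := by
    refine .of_nonneg_of_le (fun n => norm_nonneg _) ubound ?_
    exact Summable.mul_right _ (summable_geometric_of_lt_one (by norm_num) (by norm_num))
  have su : Summable u := sNu.of_norm
  refine ⟨tsum u, ?_, ?_⟩
  · have hTnext : ∀ i, T (u (i + 1)) = T (u i) - T' (u i) := by
      intro i
      rw [usucc, hg]
      simp [ContinuousLinearMap.sub_apply]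
    have partial_eq : ∀ n, T' (∑ i ∈ Finset.range n, u i) = z - T (u n) := by
      intro n
      induction n with
      | zero => simp [u0, hg z]
      | succ n IH =>
        rw [Finset.sum_range_succ, map_add, IH, hTnext n]
        abel
    have hsum : Tendsto (fun n => ∑ i ∈ Finset.range n, u i) atTop (nhds (tsum u)) :=
      su.hasSum.tendsto_sum_nat
    have L₁ : Tendsto (fun n => T' (∑ i ∈ Finset.range n, u i)) atTop (nhds (T' (tsum u))) :=
      (T'.continuous.tendsto _).comp hsum
    simp only [partial_eq] at L₁
    have hu0 : Tendsto u atTop (nhds 0) := by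
      rw [tendsto_iff_norm_sub_tendsto_zero]
      simp only [sub_zero]
      refine squeeze_zero (fun _ => norm_nonneg _) ubound ?_
      rw [← zero_mul (C * ‖z‖)]
      exact (tendsto_pow_atTop_nhds_zero_of_lt_one (by norm_num) (by norm_num)).mul
        tendsto_const_nhds
    have L₂ : Tendsto (fun n => z - T (u n)) atTop (nhds (z - T 0)) :=
      tendsto_const_nhds.sub ((T.continuous.tendsto _).comp hu0)
    have := tendsto_nhds_unique L₁ L₂
    simpa using this
  · calc ‖tsum u‖ ≤ ∑' n, ‖u n‖ := norm_tsum_le_tsum_norm sNu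
      _ ≤ ∑' n, (1 / 2) ^ n * (C * ‖z‖) :=
        Summable.tsum_le_tsum ubound sNu (Summable.mul_right _ summable_geometric_two)
      _ = (∑' n : ℕ, (1 / 2) ^ n) * (C * ‖z‖) := tsum_mul_right
      _ = 2 * C * ‖z‖ := by rw [tsum_geometric_two]; ring

/-- Lemma 1.7: perturbation of surjective operators and solvability of `T' x' = y`
near a given solution of `T x = y`. -/
theorem stmt0 {E F : Type*} [NormedAddCommGroup E] [NormedSpace ℂ E] [CompleteSpace E]
    [NormedAddCommGroup F] [NormedSpace ℂ F] [CompleteSpace F]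
    (T : E →L[ℂ] F) (hT : Function.Surjective T) (x : E) (y : F) (hxy : T x = y)
    (ε : ℝ) (hε : 0 < ε) :
    ∃ δ > (0 : ℝ), ∀ T' : E →L[ℂ] F, ‖T' - T‖ < δ →
      ∃ x' : E, T' x' = y ∧ ‖x' - x‖ < ε := by
  obtain ⟨C, hC, hpre⟩ := ContinuousLinearMap.exists_preimage_norm_le T hT
  refine ⟨min (1 / (2 * C)) (ε / (2 * C * (‖x‖ + 1))), lt_min (by positivity) (by positivity),
    fun T' hT' => ?_⟩
  have hd : ‖T' - T‖ ≤ 1 / (2 * C) := le_of_lt (lt_of_lt_of_le hT' (min_le_left _ _))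
  have hd2 : ‖T' - T‖ < ε / (2 * C * (‖x‖ + 1)) := lt_of_lt_of_le hT' (min_le_right _ _)
  obtain ⟨h, hh, hhn⟩ := aux_perturb T T' C hC hpre hd (y - T' x)
  refine ⟨x + h, by rw [map_add, hh]; abel, ?_⟩
  have hres : ‖y - T' x‖ ≤ ‖T' - T‖ * ‖x‖ := by
    calc ‖y - T' x‖ = ‖(T' - T) x‖ := by
          rw [← hxy]; simp [ContinuousLinearMap.sub_apply, norm_sub_rev]
      _ ≤ ‖T' - T‖ * ‖x‖ := (T' - T).le_opNorm x
  have hx1 : (0:ℝ) < ‖x‖ + 1 := by positivity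
  have hkey : ‖T' - T‖ * ‖x‖ < ε / (2 * C * (‖x‖ + 1)) * (‖x‖ + 1) := by
    rcases eq_or_lt_of_le (norm_nonneg x) with h0 | h0
    · rw [← h0, mul_zero]; positivity
    · calc ‖T' - T‖ * ‖x‖ < ε / (2 * C * (‖x‖ + 1)) * ‖x‖ := by gcongr
        _ ≤ ε / (2 * C * (‖x‖ + 1)) * (‖x‖ + 1) := by
            have hpos : 0 ≤ ε / (2 * C * (‖x‖ + 1)) := by positivity
            nlinarith
  have hfin : 2 * C * (‖T' - T‖ * ‖x‖) < ε := by
    have h2 := mul_lt_mul_of_pos_left hkey (by positivity : (0:ℝ) < 2 * C)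
    have heq : 2 * C * (ε / (2 * C * (‖x‖ + 1)) * (‖x‖ + 1)) = ε := by field_simp
    linarith
  calc ‖x + h - x‖ = ‖h‖ := by simp
    _ ≤ 2 * C * ‖y - T' x‖ := hhn
    _ ≤ 2 * C * (‖T' - T‖ * ‖x‖) := by gcongr
    _ < ε := hfin
end

section
/- Let f₀ ≥ f₁ ≥ f₂ ≥ ... ≥ 0 be a (finite or infinite) sequence of real-valued functions on a topological space Y, and suppose that all the partial products f₀, f₀f₁, f₀f₁f₂, ... are continuous at a point x ∈ Y. Then each fⱼ is continuous at x. -/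
/-- If `f₀ ≥ f₁ ≥ ⋯ ≥ 0` and all partial products `f₀ f₁ ⋯ fⱼ` are continuous at `x`,
then each `fⱼ` is continuous at `x`. -/
theorem stmt5 {Y : Type*} [TopologicalSpace Y] (f : ℕ → Y → ℝ) (x : Y)
    (hmono : ∀ j y, f (j + 1) y ≤ f j y)
    (hpos : ∀ j y, 0 ≤ f j y)
    (hprod : ∀ j, ContinuousAt (fun y => ∏ i ∈ Finset.range (j + 1), f i y) x) :
    ∀ j, ContinuousAt (f j) x := by
  intro j
  induction j with
  | zero => simpa using hprod 0
  | succ j ih =>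
    by_cases h : f j x = 0
    · have hval : f (j + 1) x = 0 :=
        le_antisymm (h ▸ hmono j x) (hpos _ x)
      have htend : Filter.Tendsto (f (j + 1)) (nhds x) (nhds 0) := by
        refine tendsto_of_tendsto_of_tendsto_of_le_of_le tendsto_const_nhds
          (by simpa [h] using ih.tendsto) (fun y => hpos _ y) (fun y => hmono j y)
      simpa [ContinuousAt, hval] using htend
    · have hanti : Antitone fun i => f i x := antitone_nat_of_succ_le fun n => hmono n x
      have hP : (∏ i ∈ Finset.range (j + 1), f i x) ≠ 0 := by
        refine Finset.prod_ne_zero_iff.mpr fun i hi => ?_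
        have : f j x ≤ f i x := hanti (Finset.mem_range_succ_iff.mp hi)
        exact (lt_of_lt_of_le ((hpos j x).lt_of_ne (Ne.symm h)) this).ne'
      have hQ : ContinuousAt (fun y =>
          (∏ i ∈ Finset.range (j + 2), f i y) / (∏ i ∈ Finset.range (j + 1), f i y)) x :=
        (hprod (j + 1)).div (hprod j) hP
      have hev : (fun y =>
          (∏ i ∈ Finset.range (j + 2), f i y) / (∏ i ∈ Finset.range (j + 1), f i y))
          =ᶠ[nhds x] f (j + 1) := by
        have hne : ∀ᶠ y in nhds x, (∏ i ∈ Finset.range (j + 1), f i y) ≠ 0 :=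
          (hprod j).eventually_ne hP
        filter_upwards [hne] with y hy
        rw [Finset.prod_range_succ, mul_comm, mul_div_assoc, div_self hy, mul_one]
      exact hQ.congr hev
end
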